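/- arXiv:2506.08755 — 4 statements merged into one kernel-verified Lean document; each statement's English description precedes it below -/
import Mathlib

section
/- Being abelian is a profinite property: if Γ₁ and Γ₂ are residually finite groups with isomorphic profinite completions (as topological groups), then Γ₁ is abelian if and only if Γ₂ is abelian. -/
/-- The index set for the profinite completion: finite-index normal subgroups. -/
structure FinIndexNormal (Γ : Type*) [Group Γ] where
  N : Subgroup Γ
  normal : N.Normal
  finiteIndex : N.FiniteIndex

attribute [instance] FinIndexNormal.normal FinIndexNormal.finiteIndex

variable (Γ : Type*) [Group Γ]

instance (K : FinIndexNormal Γ) : TopologicalSpace (Γ ⧸ K.N) := ⊥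
instance (K : FinIndexNormal Γ) : DiscreteTopology (Γ ⧸ K.N) := ⟨rfl⟩
instance (K : FinIndexNormal Γ) : IsTopologicalGroup (Γ ⧸ K.N) where
  continuous_mul := continuous_of_discreteTopology
  continuous_inv := continuous_of_discreteTopology

/-- The profinite completion of `Γ`, as the subgroup of compatible families in the
product of all finite quotients of `Γ`. -/
def profiniteCompletionSubgroup : Subgroup (Π K : FinIndexNormal Γ, Γ ⧸ K.N) where
  carrier := {x | ∀ (K L : FinIndexNormal Γ) (h : K.N ≤ L.N),
    QuotientGroup.map K.N L.N (MonoidHom.id Γ) (by simpa using h) (x K) = x L}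
  one_mem' := by intro K L h; simp
  mul_mem' := by
    intro a b ha hb K L h
    simp only [Pi.mul_apply, map_mul, ha K L h, hb K L h]
  inv_mem' := by
    intro a ha K L h
    simp only [Pi.inv_apply, map_inv, ha K L h]

/-- The profinite completion, as a topological group. -/
abbrev ProfiniteCompletion := ↥(profiniteCompletionSubgroup Γ)

/-- The canonical map `ι : Γ → Γ̂`. -/
def toProfiniteCompletion : Γ →* ProfiniteCompletion Γ where
  toFun g := ⟨fun K => QuotientGroup.mk g, fun K L h => rfl⟩
  map_one' := rfl
  map_mul' _ _ := rfl

/-- A group is residually finite if every nontrivial element survives in some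
finite quotient. -/
def ResiduallyFinite : Prop :=
  ∀ g : Γ, g ≠ 1 → ∃ (Q : Type) (_ : Group Q) (_ : Finite Q) (φ : Γ →* Q), φ g ≠ 1

/-!
Commutativity is algebraic, so it passes along any group isomorphism of the completions. An
abelian group has abelian finite quotients, hence an abelian completion, which sits inside their
product. Conversely, residual finiteness makes `Γ → Γ̂` injective, and a subgroup of an abelian
group is abelian.
-/

open Function

theorem forall_mul_comm_of_injective {F G H : Type*} [Mul G] [Mul H] [FunLike F G H]
    [MulHomClass F G H] (f : F) (hf : Injective f) (hH : ∀ a b : H, a * b = b * a) :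
    ∀ a b : G, a * b = b * a :=
  fun a b => hf <| by rw [map_mul, map_mul, hH]

theorem MulEquiv.forall_mul_comm_iff {G H : Type*} [Mul G] [Mul H] (e : G ≃* H) :
    (∀ a b : G, a * b = b * a) ↔ ∀ a b : H, a * b = b * a :=
  ⟨forall_mul_comm_of_injective e.symm e.symm.injective,
    forall_mul_comm_of_injective e e.injective⟩

variable {Γ}

theorem injective_toProfiniteCompletion (h : ResiduallyFinite Γ) :
    Injective (toProfiniteCompletion Γ) := by
  refine (injective_iff_map_eq_one _).2 fun g hg => ?_
  by_contra hne
  obtain ⟨Q, _, _, φ, hφ⟩ := h g hne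
  have hφK : (QuotientGroup.mk g : Γ ⧸ φ.ker) = 1 :=
    congrArg (fun x : ProfiniteCompletion Γ => x.1 ⟨φ.ker, inferInstance, inferInstance⟩) hg
  exact hφ ((QuotientGroup.eq_one_iff g).1 hφK)

theorem profiniteCompletion_mul_comm (h : ∀ a b : Γ, a * b = b * a)
    (x y : ProfiniteCompletion Γ) : x * y = y * x := by
  ext K
  change x.1 K * y.1 K = y.1 K * x.1 K
  induction x.1 K using QuotientGroup.induction_on
  induction y.1 K using QuotientGroup.induction_on
  rw [← QuotientGroup.mk_mul, ← QuotientGroup.mk_mul, h]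

theorem forall_mul_comm_iff_profiniteCompletion (h : ResiduallyFinite Γ) :
    (∀ a b : Γ, a * b = b * a) ↔ ∀ x y : ProfiniteCompletion Γ, x * y = y * x :=
  ⟨profiniteCompletion_mul_comm,
    forall_mul_comm_of_injective _ (injective_toProfiniteCompletion h)⟩

theorem abelian_is_profinite_property_general (Γ₁ Γ₂ : Type*) [Group Γ₁] [Group Γ₂]
    (h₁ : ResiduallyFinite Γ₁) (h₂ : ResiduallyFinite Γ₂)
    (e : ProfiniteCompletion Γ₁ ≃* ProfiniteCompletion Γ₂) :
    (∀ a b : Γ₁, a * b = b * a) ↔ (∀ a b : Γ₂, a * b = b * a) := by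
  rw [forall_mul_comm_iff_profiniteCompletion h₁, forall_mul_comm_iff_profiniteCompletion h₂]
  exact e.forall_mul_comm_iff

theorem abelian_is_profinite_property (Γ₁ Γ₂ : Type*) [Group Γ₁] [Group Γ₂]
    (h₁ : ResiduallyFinite Γ₁) (h₂ : ResiduallyFinite Γ₂)
    (e : ProfiniteCompletion Γ₁ ≃* ProfiniteCompletion Γ₂)
    (he : Continuous e) (he' : Continuous e.symm) :
    (∀ a b : Γ₁, a * b = b * a) ↔ (∀ a b : Γ₂, a * b = b * a) :=
  abelian_is_profinite_property_general Γ₁ Γ₂ h₁ h₂ e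
end

section
/- Being nilpotent of class at most c is a profinite property: if Γ₁ and Γ₂ are residually finite groups with isomorphic profinite completions (as topological groups), then Γ₁ is nilpotent of class ≤ c if and only if Γ₂ is nilpotent of class ≤ c. -/
variable (Γ : Type*) [Group Γ]

/-! Nilpotency of class at most `c` passes to subgroups and to quotients, hence to products of
quotients and their subgroups; so it passes from `Γ` to `Γ̂ ≤ ∏ Γ ⧸ N`. Conversely, residual
finiteness makes `Γ → Γ̂` injective, so `Γ` is a subgroup of `Γ̂`. Hence `Γ` has class at most
`c` iff the abstract group `Γ̂` does. -/

namespace Subgroup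

variable {G H : Type*} [Group G] [Group H] {n : ℕ}

theorem top_lowerCentralSeries_eq_bot_of_injective (f : G →* H) (hf : Function.Injective f)
    (h : (⊤ : Subgroup H).lowerCentralSeries n = ⊥) :
    (⊤ : Subgroup G).lowerCentralSeries n = ⊥ := by
  rw [← map_eq_bot_iff_of_injective _ hf, eq_bot_iff, map_lowerCentralSeries, ← h]
  exact lowerCentralSeries_mono n le_top

theorem top_lowerCentralSeries_eq_bot_of_surjective (f : G →* H) (hf : Function.Surjective f)
    (h : (⊤ : Subgroup G).lowerCentralSeries n = ⊥) :
    (⊤ : Subgroup H).lowerCentralSeries n = ⊥ := by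
  rw [← map_top_of_surjective f hf, ← map_lowerCentralSeries, h, map_bot]

theorem top_lowerCentralSeries_eq_bot_iff_of_mulEquiv (e : G ≃* H) :
    (⊤ : Subgroup G).lowerCentralSeries n = ⊥ ↔ (⊤ : Subgroup H).lowerCentralSeries n = ⊥ :=
  ⟨top_lowerCentralSeries_eq_bot_of_injective e.symm.toMonoidHom e.symm.injective,
    top_lowerCentralSeries_eq_bot_of_injective e.toMonoidHom e.injective⟩

theorem top_lowerCentralSeries_pi_eq_bot {ι : Type*} {Gs : ι → Type*} [∀ i, Group (Gs i)]
    (h : ∀ i, (⊤ : Subgroup (Gs i)).lowerCentralSeries n = ⊥) :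
    (⊤ : Subgroup (∀ i, Gs i)).lowerCentralSeries n = ⊥ := by
  rw [eq_bot_iff, ← (pi_eq_bot_iff _).mpr h]
  exact top_lowerCentralSeries_pi_le n

end Subgroup

section ProfiniteCompletion

open Subgroup

variable {Γ : Type*} [Group Γ]

theorem toProfiniteCompletion_injective [Group.ResiduallyFinite Γ] :
    Function.Injective (toProfiniteCompletion Γ) := by
  refine (injective_iff_map_eq_one _).mpr fun g hg ↦
    Group.eq_one_iff_forall_finiteIndexNormalSubroup g fun N ↦ ?_
  have hN : (toProfiniteCompletion Γ g).1 ⟨N.toSubgroup, inferInstance, inferInstance⟩ = 1 := by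
    rw [hg]; rfl
  exact (QuotientGroup.eq_one_iff g).mp hN

theorem top_lowerCentralSeries_profiniteCompletion_eq_bot {n : ℕ}
    (h : (⊤ : Subgroup Γ).lowerCentralSeries n = ⊥) :
    (⊤ : Subgroup (ProfiniteCompletion Γ)).lowerCentralSeries n = ⊥ :=
  top_lowerCentralSeries_eq_bot_of_injective _ (profiniteCompletionSubgroup Γ).subtype_injective
    (top_lowerCentralSeries_pi_eq_bot fun K ↦
      top_lowerCentralSeries_eq_bot_of_surjective _ (QuotientGroup.mk'_surjective K.N) h)

theorem top_lowerCentralSeries_eq_bot_iff_profiniteCompletion [Group.ResiduallyFinite Γ]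
    {n : ℕ} : (⊤ : Subgroup Γ).lowerCentralSeries n = ⊥ ↔
      (⊤ : Subgroup (ProfiniteCompletion Γ)).lowerCentralSeries n = ⊥ :=
  ⟨top_lowerCentralSeries_profiniteCompletion_eq_bot,
    top_lowerCentralSeries_eq_bot_of_injective _ toProfiniteCompletion_injective⟩

end ProfiniteCompletion

theorem nilpotent_class_le_is_profinite_property_general (Γ₁ Γ₂ : Type*) [Group Γ₁] [Group Γ₂]
    (h₁ : ResiduallyFinite Γ₁) (h₂ : ResiduallyFinite Γ₂) (c : ℕ)
    (e : ProfiniteCompletion Γ₁ ≃* ProfiniteCompletion Γ₂) :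
    (⊤ : Subgroup Γ₁).lowerCentralSeries c = ⊥ ↔ (⊤ : Subgroup Γ₂).lowerCentralSeries c = ⊥ := by
  have := Group.residuallyFinite_of_forall_exists_finite_monoidHom h₁
  have := Group.residuallyFinite_of_forall_exists_finite_monoidHom h₂
  exact top_lowerCentralSeries_eq_bot_iff_profiniteCompletion.trans
    ((Subgroup.top_lowerCentralSeries_eq_bot_iff_of_mulEquiv e).trans
      top_lowerCentralSeries_eq_bot_iff_profiniteCompletion.symm)

theorem nilpotent_class_le_is_profinite_property (Γ₁ Γ₂ : Type*) [Group Γ₁] [Group Γ₂]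
    (h₁ : ResiduallyFinite Γ₁) (h₂ : ResiduallyFinite Γ₂) (c : ℕ)
    (e : ProfiniteCompletion Γ₁ ≃* ProfiniteCompletion Γ₂)
    (he : Continuous e) (he' : Continuous e.symm) :
    (⊤ : Subgroup Γ₁).lowerCentralSeries c = ⊥ ↔ (⊤ : Subgroup Γ₂).lowerCentralSeries c = ⊥ :=
  nilpotent_class_le_is_profinite_property_general Γ₁ Γ₂ h₁ h₂ c e
end

section
/- For every prime p, the quaternary quadratic form ⟨1,1,1,1⟩ (x₁² + x₂² + x₃² + x₄²) is isometric over the p-adic integers ℤ_p to the form ⟨−1,−1,−1,−1⟩ (−x₁² − x₂² − x₃² − x₄²). -/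
/-!
Right multiplication by a quaternion `q = a + bi + cj + dk` multiplies the norm form by
`a² + b² + c² + d²`, so it suffices to write `-1` as a sum of four squares in `ℤ_p`.
For odd `p`, write `-1 = u² + v²` in `ZMod p` with `u ≠ 0`; Hensel's lemma then lifts `u` to a
square root of `-1 - y²`, `y` a lift of `v`. For `p = 2`, `-1 = 1 + 1 + 4 + (√-7)²`, and `√-7 ∈ ℤ₂`
by Hensel's lemma since `-7 ≡ 1 mod 8`.
-/

open Polynomial

namespace PadicInt

variable {p : ℕ} [Fact p.Prime]

theorem isSquare_of_norm_sq_sub_lt {a x : ℤ_[p]} (h : ‖x ^ 2 - a‖ < ‖2 * x‖ ^ 2) :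
    IsSquare a := by
  have hF : aeval x (X ^ 2 - C a) = x ^ 2 - a := by simp
  have hF' : aeval x (derivative (X ^ 2 - C a)) = 2 * x := by norm_num
  obtain ⟨z, hz, -⟩ := hensels_lemma (F := X ^ 2 - C a) (a := x) (by rwa [hF, hF'])
  exact ⟨z, by simpa [sub_eq_zero, sq, eq_comm] using hz⟩

theorem norm_lt_one_iff_toZMod_eq_zero {z : ℤ_[p]} : ‖z‖ < 1 ↔ toZMod z = 0 := by
  rw [← RingHom.mem_ker, ker_toZMod, IsLocalRing.mem_maximalIdeal, mem_nonunits]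

theorem norm_eq_one_iff_toZMod_ne_zero {z : ℤ_[p]} : ‖z‖ = 1 ↔ toZMod z ≠ 0 := by
  rw [Ne, ← norm_lt_one_iff_toZMod_eq_zero, not_lt]
  exact ⟨ge_of_eq, (norm_le_one z).antisymm⟩

theorem isSquare_of_isSquare_toZMod (hp : p ≠ 2) {a : ℤ_[p]} (ha : toZMod a ≠ 0)
    (hsq : IsSquare (toZMod a)) : IsSquare a := by
  obtain ⟨u, hu⟩ := hsq
  obtain ⟨x, rfl⟩ := ZMod.ringHom_surjective toZMod u
  have hx : ‖x‖ = 1 := norm_eq_one_iff_toZMod_ne_zero.mpr fun hx => by simp [hu, hx] at ha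
  have h2 : ‖(2 : ℤ_[p])‖ = 1 := by
    rw [norm_eq_one_iff_toZMod_ne_zero, map_ofNat, ← Nat.cast_ofNat, Ne,
      ZMod.natCast_eq_zero_iff, Nat.prime_dvd_prime_iff_eq Fact.out Nat.prime_two]
    exact hp
  refine isSquare_of_norm_sq_sub_lt (x := x) ?_
  rw [norm_mul, h2, hx, one_mul, one_pow, norm_lt_one_iff_toZMod_eq_zero, map_sub, map_pow, hu,
    sq, sub_self]

theorem isSquare_neg_seven : IsSquare (-7 : ℤ_[2]) := by
  refine isSquare_of_norm_sq_sub_lt (x := 1) ?_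
  have h2 : ‖(2 : ℤ_[2])‖ = 2⁻¹ := by simpa using norm_p (p := 2)
  rw [show (1 : ℤ_[2]) ^ 2 - -7 = 2 ^ 3 by norm_num, mul_one, norm_pow, h2]
  norm_num

theorem exists_sq_add_sq_add_sq_add_sq_eq_neg_one :
    ∃ a b c d : ℤ_[p], a ^ 2 + b ^ 2 + c ^ 2 + d ^ 2 = -1 := by
  rcases eq_or_ne p 2 with rfl | hp
  · obtain ⟨z, hz⟩ := isSquare_neg_seven
    exact ⟨1, 1, 2, z, by linear_combination -hz⟩
  obtain ⟨u, v, huv, hu⟩ : ∃ u v : ZMod p, u ^ 2 + v ^ 2 = -1 ∧ u ≠ 0 := by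
    obtain ⟨u, v, huv⟩ := ZMod.sq_add_sq p (-1)
    by_cases hu : u = 0
    · refine ⟨v, u, by linear_combination huv, fun hv => ?_⟩
      simp [hu, hv] at huv
    · exact ⟨u, v, huv, hu⟩
  obtain ⟨y, rfl⟩ := ZMod.ringHom_surjective toZMod v
  have hres : toZMod (-1 - y ^ 2) = u ^ 2 := by
    rw [map_sub, map_neg, map_one, map_pow]
    linear_combination -huv
  obtain ⟨z, hz⟩ := isSquare_of_isSquare_toZMod hp (by simpa [hres] using hu)
    (hres ▸ IsSquare.sq u)
  exact ⟨z, y, 0, 0, by linear_combination -hz⟩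

end PadicInt

namespace Matrix

variable {R : Type*} [CommRing R]

/-- Rows `1 q, i q, j q, k q` for `q = a + bi + cj + dk`. -/
def quaternionRightMul (a b c d : R) : Matrix (Fin 4) (Fin 4) R :=
  !![a, b, c, d; -b, a, -d, c; -c, d, a, -b; -d, -c, b, a]

theorem quaternionRightMul_transpose_mul_self (a b c d : R) :
    (quaternionRightMul a b c d)ᵀ * quaternionRightMul a b c d =
      (a ^ 2 + b ^ 2 + c ^ 2 + d ^ 2) • 1 := by
  ext i j
  fin_cases i <;> fin_cases j <;>
    simp [quaternionRightMul, mul_apply, Fin.sum_univ_four] <;> ring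

end Matrix

/-- For every prime `p`, the quadratic forms `⟨1,1,1,1⟩` and `⟨-1,-1,-1,-1⟩` are
isometric over `ℤ_p`: there is an invertible `4 × 4` matrix `M` over `ℤ_p` with
`Mᵀ * M = -1`, so that `-(M v)ᵀ (M v) = vᵀ v` for all `v`. -/
theorem quadform_one_isometric_neg_one (p : ℕ) [Fact p.Prime] :
    ∃ M : Matrix (Fin 4) (Fin 4) ℤ_[p], IsUnit M ∧ M.transpose * M = -1 := by
  obtain ⟨a, b, c, d, h⟩ := PadicInt.exists_sq_add_sq_add_sq_add_sq_eq_neg_one (p := p)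
  set M := Matrix.quaternionRightMul a b c d
  have hM : M.transpose * M = -1 := by
    rw [Matrix.quaternionRightMul_transpose_mul_self, h, neg_one_smul]
  have hM_inv : -M.transpose * M = 1 := by rw [neg_mul, hM, neg_neg]
  exact ⟨M, (M.isUnit_iff_isUnit_det).mpr (Matrix.isUnit_det_of_left_inverse hM_inv), hM⟩
end

section
/- Let G be a finite group acting transitively on a finite set X, with point stabilizer H, and suppose some g ∈ G acts on X with cycle type (1,2,2,…,2) (one fixed point and all other cycles of length 2). Then every subgroup of G that is almost conjugate to H is conjugate to H. -/
/-!
Double counting shows that almost conjugate point stabilizers have the same permutation character,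
so `g` also acts on `G ⧸ H'` as an involution with a single fixed point. If involutions `a`, `b`
each have a single fixed point, then `a` permutes the fixed points of `a * b` and fixes only the
common fixed points of `a` and `b`. Hence `a * b` has an odd number of fixed points exactly when
`a` and `b` fix the same point, and this criterion holds in `X` exactly when it holds in
`G ⧸ H'`. A conjugate `k ∈ H'` of `g` and each of its `H'`-conjugates fix the trivial coset,
so they also fix the same point of `X`. Hence `H'` fixes that point, and counting shows that
`H'` is its stabilizer.
-/

open MulAction Function

namespace Subgroup

variable {G : Type*} [Group G]

def AlmostConjugate (H₁ H₂ : Subgroup G) : Prop :=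
  ∀ c : ConjClasses G, Nat.card {x : G // x ∈ H₁ ∧ ConjClasses.mk x = c} =
    Nat.card {x : G // x ∈ H₂ ∧ ConjClasses.mk x = c}

theorem card_eq_sum_card_conjClasses [Fintype (ConjClasses G)] [Finite G] (K : Subgroup G) :
    Nat.card K = ∑ c : ConjClasses G, Nat.card {x : G // x ∈ K ∧ ConjClasses.mk x = c} := by
  rw [← Nat.card_sigma]
  exact Nat.card_congr ((Equiv.sigmaCongrRight fun c =>
    (Equiv.subtypeSubtypeEquivSubtypeInter _ _).symm).trans
      (Equiv.sigmaFiberEquiv fun x : K => ConjClasses.mk (x : G))).symm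

theorem AlmostConjugate.card_eq [Finite G] {H₁ H₂ : Subgroup G}
    (h : H₁.AlmostConjugate H₂) : Nat.card H₁ = Nat.card H₂ := by
  have := Fintype.ofFinite (ConjClasses G)
  rw [card_eq_sum_card_conjClasses, card_eq_sum_card_conjClasses]
  exact Finset.sum_congr rfl fun c _ => h c

end Subgroup

section FixedPoints

variable {G W : Type*} [Group G] [MulAction G W]

/-- Double counting the pairs `(y, w)` with `y` conjugate to `a` and `y • w = w`. -/
theorem ncard_conjClass_mul_ncard_fixedBy [Finite G] [Finite W] [IsPretransitive G W]
    (w₀ : W) (a : G) :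
    (ConjClasses.mk a).carrier.ncard * (fixedBy W a).ncard =
      Nat.card W *
        Nat.card {x : G // x ∈ stabilizer G w₀ ∧ ConjClasses.mk x = ConjClasses.mk a} := by
  classical
  have := Fintype.ofFinite G
  have := Fintype.ofFinite W
  rw [Set.ncard_eq_toFinset_card', Nat.card_eq_fintype_card, ← Finset.card_univ]
  refine Finset.card_mul_eq_card_mul (fun (y : G) (w : W) => y • w = w) ?_ ?_
  · intro y hy
    rw [Set.mem_toFinset, ConjClasses.mem_carrier_iff_mk_eq, ConjClasses.mk_eq_mk_iff_isConj,
      isConj_comm, isConj_iff] at hy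
    obtain ⟨c, rfl⟩ := hy
    have hfix : (Finset.univ.bipartiteAbove (fun (y : G) (w : W) => y • w = w) (c * a * c⁻¹) :
        Set W) = fixedBy W (c * a * c⁻¹) := by
      ext
      simp
    rw [← Set.ncard_coe_finset, hfix, ← smul_fixedBy, Set.ncard_smul_set]
  · intro w _
    obtain ⟨b, rfl⟩ := exists_smul_eq G w₀ w
    rw [Nat.card_eq_fintype_card, Fintype.card_subtype]
    refine Finset.card_nbij' (fun y => b⁻¹ * y * b) (fun x => b * x * b⁻¹) ?_ ?_
      (fun y _ => by group) (fun x _ => by group)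
    · intro y hy
      simp only [Finset.coe_bipartiteBelow, Set.mem_ofPred_eq, Set.mem_toFinset,
        ConjClasses.mem_carrier_iff_mk_eq, Finset.coe_filter, Finset.mem_univ, true_and,
        mem_stabilizer_iff] at hy ⊢
      obtain ⟨hya, hyw⟩ := hy
      refine ⟨by rw [mul_smul, mul_smul, hyw, inv_smul_smul], ?_⟩
      rw [← hya, ConjClasses.mk_eq_mk_iff_isConj, isConj_iff]
      exact ⟨b, by group⟩
    · intro x hx
      simp only [Finset.coe_bipartiteBelow, Set.mem_ofPred_eq, Set.mem_toFinset,
        ConjClasses.mem_carrier_iff_mk_eq, Finset.coe_filter, Finset.mem_univ, true_and,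
        mem_stabilizer_iff] at hx ⊢
      obtain ⟨hxw, hxa⟩ := hx
      refine ⟨?_, by rw [mul_smul, mul_smul, inv_smul_smul, hxw]⟩
      rw [← hxa, ConjClasses.mk_eq_mk_iff_isConj, isConj_iff]
      exact ⟨b⁻¹, by group⟩

theorem Subgroup.AlmostConjugate.ncard_fixedBy_eq [Finite G] [Finite W] [IsPretransitive G W]
    {W' : Type*} [MulAction G W'] [Finite W'] [IsPretransitive G W'] {w : W} {w' : W'}
    (h : (stabilizer G w).AlmostConjugate (stabilizer G w')) (a : G) :
    (fixedBy W a).ncard = (fixedBy W' a).ncard := by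
  have hcard : Nat.card W = Nat.card W' := by
    have h₁ := (stabilizer G w).index_mul_card
    have h₂ := (stabilizer G w').index_mul_card
    rw [index_stabilizer_of_transitive, h.card_eq] at h₁
    rw [index_stabilizer_of_transitive] at h₂
    exact Nat.eq_of_mul_eq_mul_right Nat.card_pos (h₁.trans h₂.symm)
  have hclass : 0 < (ConjClasses.mk a).carrier.ncard :=
    (Set.ncard_pos (Set.toFinite _)).mpr ⟨a, ConjClasses.mem_carrier_mk⟩
  refine Nat.eq_of_mul_eq_mul_left hclass ?_
  rw [ncard_conjClass_mul_ncard_fixedBy w, ncard_conjClass_mul_ncard_fixedBy w', hcard, h]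

theorem Function.Involutive.ncard_modEq_ncard_inter_fixedPoints {α : Type*} [Finite α]
    {f : α → α} (hf : Involutive f) {s : Set α} (hs : Set.MapsTo f s s) :
    s.ncard ≡ (s ∩ fixedPoints f).ncard [MOD 2] := by
  classical
  have := Fintype.ofFinite s
  let g : Function.End s := hs.restrict f s s
  have hg : g ^ 2 ^ 1 = 1 := by
    funext x
    exact Subtype.ext (hf x)
  have hfix : Subtype.val '' fixedPoints g = s ∩ fixedPoints f := by
    ext x
    simp only [Set.mem_image, Subtype.exists, exists_and_right, exists_eq_right, mem_fixedPoints,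
      IsFixedPt, Set.mem_inter_iff]
    exact ⟨fun ⟨hx, h⟩ => ⟨hx, congrArg Subtype.val h⟩,
      fun ⟨hx, h⟩ => ⟨hx, Subtype.ext h⟩⟩
  have := Equiv.Perm.card_fixedPoints_modEq (p := 2) hg
  rwa [← Nat.card_eq_fintype_card, ← Nat.card_eq_fintype_card, Nat.card_coe_set_eq,
    Nat.card_coe_set_eq, ← Set.ncard_image_of_injective _ Subtype.val_injective, hfix] at this

theorem odd_ncard_fixedBy_mul_iff [Finite W] {a b : G}
    (ha : ∀ w : W, a • a • w = w) (hb : ∀ w : W, b • b • w = w)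
    (ha₁ : (fixedBy W a).Subsingleton) :
    Odd (fixedBy W (a * b)).ncard ↔ (fixedBy W a ∩ fixedBy W b).Nonempty := by
  have hab : ∀ w, w ∈ fixedBy W (a * b) ↔ b • w = a • w := fun w => by
    rw [mem_fixedBy, mul_smul]
    exact ⟨fun h => by conv_rhs => rw [← h, ha], fun h => by rw [h, ha]⟩
  have hmaps : Set.MapsTo (a • ·) (fixedBy W (a * b)) (fixedBy W (a * b)) := fun w hw => by
    rw [hab] at hw ⊢
    show b • a • w = a • a • w
    rw [← hw, hb, hw, ha]
  have hinter : fixedBy W (a * b) ∩ fixedPoints (a • ·) = fixedBy W a ∩ fixedBy W b := by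
    ext w
    simp only [Set.mem_inter_iff, hab, Function.mem_fixedPoints, IsFixedPt, mem_fixedBy]
    constructor
    · rintro ⟨hba, haw⟩; exact ⟨haw, hba.trans haw⟩
    · rintro ⟨haw, hbw⟩; exact ⟨hbw.trans haw.symm, haw⟩
  have hmod := Involutive.ncard_modEq_ncard_inter_fixedPoints ha hmaps
  rw [hinter] at hmod
  have hle : (fixedBy W a ∩ fixedBy W b).ncard ≤ 1 :=
    Set.ncard_le_one_iff_subsingleton.mpr (ha₁.anti Set.inter_subset_left)
  rw [Nat.odd_iff, hmod, ← Set.ncard_pos]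
  omega

theorem fixedBy_sq_eq_univ_iff {a : G} :
    fixedBy W (a ^ 2) = Set.univ ↔ ∀ w : W, a • a • w = w := by
  simp [Set.eq_univ_iff_forall, sq, mul_smul]

theorem conj_smul_conj_smul {a : G} (ha : ∀ w : W, a • a • w = w) (d : G) (w : W) :
    (d * a * d⁻¹) • (d * a * d⁻¹) • w = w := by
  simp [mul_smul, ha]

theorem smul_smul_eq_self_of_ncard_fixedBy_eq [Finite W] {W' : Type*} [MulAction G W']
    [Finite W']
    (hchar : ∀ a : G, (fixedBy W a).ncard = (fixedBy W' a).ncard) {a : G}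
    (ha : ∀ w : W, a • a • w = w) (w' : W') : a • a • w' = w' := by
  have hW : fixedBy W (a ^ 2) = fixedBy W (1 : G) := by
    rw [fixedBy_one_eq_univ W G, fixedBy_sq_eq_univ_iff.mpr ha]
  refine fixedBy_sq_eq_univ_iff.mp (Set.eq_of_subset_of_ncard_le (Set.subset_univ _) ?_) w'
  rw [← fixedBy_one_eq_univ W' G, ← hchar, ← hchar, hW]

variable {X Y : Type*} [MulAction G X] [Finite X] [MulAction G Y] [Finite Y]

theorem smul_eq_of_inter_fixedBy_conj_nonempty
    (hchar : ∀ a : G, (fixedBy X a).ncard = (fixedBy Y a).ncard) {g : G} {x₁ : X}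
    (hsq : ∀ x : X, g • g • x = x) (hfix : fixedBy X g = {x₁}) {d₁ d₂ : G}
    (h : (fixedBy Y (d₁ * g * d₁⁻¹) ∩ fixedBy Y (d₂ * g * d₂⁻¹)).Nonempty) :
    d₁ • x₁ = d₂ • x₁ := by
  have hsqY := smul_smul_eq_self_of_ncard_fixedBy_eq hchar hsq
  have hfixX : ∀ d : G, fixedBy X (d * g * d⁻¹) = {d • x₁} := fun d => by
    rw [← smul_fixedBy, hfix, Set.smul_set_singleton]
  have hsubY : (fixedBy Y (d₁ * g * d₁⁻¹)).Subsingleton := by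
    rw [← Set.ncard_le_one_iff_subsingleton, ← hchar, hfixX, Set.ncard_singleton]
  have hodd : Odd (fixedBy Y (d₁ * g * d₁⁻¹ * (d₂ * g * d₂⁻¹))).ncard :=
    (odd_ncard_fixedBy_mul_iff (conj_smul_conj_smul hsqY _) (conj_smul_conj_smul hsqY _)
      hsubY).mpr h
  rwa [← hchar, odd_ncard_fixedBy_mul_iff (conj_smul_conj_smul hsq _) (conj_smul_conj_smul hsq _)
    (by simp [hfixX]), hfixX, hfixX, Set.singleton_inter_nonempty] at hodd

theorem exists_stabilizer_le_stabilizer [IsPretransitive G Y]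
    (hchar : ∀ a : G, (fixedBy X a).ncard = (fixedBy Y a).ncard) {g : G} {x₁ : X}
    (hsq : ∀ x : X, g • g • x = x) (hfix : fixedBy X g = {x₁}) (y₀ : Y) :
    ∃ x : X, stabilizer G y₀ ≤ stabilizer G x := by
  obtain ⟨y, hy⟩ : (fixedBy Y g).Nonempty := by
    rw [← Set.ncard_pos, ← hchar, hfix, Set.ncard_singleton]
    exact one_pos
  obtain ⟨d, rfl⟩ := exists_smul_eq G y y₀
  have hk : d * g * d⁻¹ ∈ stabilizer G (d • y) := by
    rw [mem_stabilizer_iff, mul_smul, mul_smul, inv_smul_smul, hy]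
  refine ⟨d • x₁, fun h hh => ?_⟩
  rw [mem_stabilizer_iff, ← mul_smul]
  refine (smul_eq_of_inter_fixedBy_conj_nonempty hchar hsq hfix ⟨d • y, hk, ?_⟩).symm
  have hconj : h * d * g * (h * d)⁻¹ = h * (d * g * d⁻¹) * h⁻¹ := by group
  rw [hconj]
  exact mul_mem (mul_mem hh hk) (inv_mem hh)

end FixedPoints

/-- If a finite group `G` acts transitively on a finite set `X` and some `g ∈ G`
acts with cycle type `(1,2,…,2)` (a unique fixed point, all other cycles of
length two), then every subgroup of `G` almost conjugate to a point stabilizer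
is conjugate to it. -/
theorem conjugate_of_almostConjugate_of_cycleType (G X : Type*) [Group G] [Finite G]
    [MulAction G X] [Finite X] [MulAction.IsPretransitive G X]
    (x₀ : X) (g : G)
    (hsq : ∀ x : X, g • g • x = x) (hfix : ∃! x : X, g • x = x)
    (H' : Subgroup G)
    (hac : ∀ c : ConjClasses G,
      Nat.card {x : G // x ∈ MulAction.stabilizer G x₀ ∧ ConjClasses.mk x = c} =
        Nat.card {x : G // x ∈ H' ∧ ConjClasses.mk x = c}) :
    ∃ k : G, H' = (MulAction.stabilizer G x₀).map (MulAut.conj k).toMonoidHom := by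
  have hac' : (stabilizer G x₀).AlmostConjugate (stabilizer G ((1 : G) : G ⧸ H')) := by
    rwa [stabilizer_quotient]
  obtain ⟨x₁, hx₁, hx₁_unique⟩ := hfix
  have hfix' : fixedBy X g = {x₁} := Set.eq_singleton_iff_unique_mem.mpr ⟨hx₁, hx₁_unique⟩
  obtain ⟨x, hle⟩ := exists_stabilizer_le_stabilizer hac'.ncard_fixedBy_eq hsq hfix' _
  obtain ⟨k, rfl⟩ := exists_smul_eq G x₀ x
  rw [stabilizer_quotient, stabilizer_smul_eq_stabilizer_map_conj] at hle
  refine ⟨k, Subgroup.eq_of_le_of_card_ge hle ?_⟩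
  rw [Subgroup.card_map_of_injective (MulAut.conj k).injective]
  exact (Subgroup.AlmostConjugate.card_eq hac).le
end
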